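/- Let P ∈ B₃⁺ be represented by a nondecreasing word of length n, let u ∈ ℤ, set α = δᵘ·P and s = u + n. Then α⁻¹ = δ^{-s}·τ^{-s}(P*), and τ^{-s}(P*) is a positive braid represented by a nondecreasing word of length n (so this expression is the Garside normal form of α⁻¹; here τ^{-s}(x) = δˢ·x·δ^{-s}). -/

import Mathlib

/-!
Conjugation by `δ` rotates the band generators, `δ⁻¹ a_i δ = a_{i+1}`, and `a_i⁻¹ δ = a_{i-1}`.
The complement is computed factor by factor, `(XY)* = Y* · τ^{e(Y)}(X*)`, so the complement of
`a_{i₁} ⋯ a_{iₙ}` is the positive word `∏_{j<n} a_{i_{n-j} - 1 + j}`. Reversing a word while adding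
its position to each letter exchanges the steps `+0` and `+1`, so this word is again nondecreasing
of length `n`, and `τ^{-s}` merely shifts all of its indices. The formula for `α⁻¹` is a direct
computation in the group.
-/

namespace Braid

/-- Relations of the dual (band-generator) presentation of the 3-braid group:
`a (i+1) * a i = a (i+2) * a (i+1)` for all `i : ZMod 3`. -/
def braidRels : Set (FreeGroup (ZMod 3)) :=
  { r | ∃ i : ZMod 3,
      r = FreeGroup.of (i + 1) * FreeGroup.of i *
          (FreeGroup.of (i + 2) * FreeGroup.of (i + 1))⁻¹ }

/-- The 3-braid group with the band-generator presentation. -/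
abbrev B3 := PresentedGroup braidRels

/-- The band generators `a i`, `i : ZMod 3`. -/
def a (i : ZMod 3) : B3 := PresentedGroup.of i

/-- The fundamental element `δ = a₂ * a₁`. -/
def δ : B3 := a 2 * a 1

/-- The submonoid of positive braids. -/
def Pos : Submonoid B3 := Submonoid.closure (Set.range a)

/-- The exponent-sum homomorphism, sending each generator to `1 : ℤ`. -/
def eHom : B3 →* Multiplicative ℤ :=
  PresentedGroup.toGroup (f := fun _ => Multiplicative.ofAdd (1 : ℤ)) (by
    rintro r ⟨i, rfl⟩
    simp only [map_mul, map_inv, FreeGroup.lift_apply_of]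
    group)

/-- The exponent sum (letter length on positive braids) as an integer. -/
def elen (x : B3) : ℤ := Multiplicative.toAdd (eHom x)

/-- The right complement `X* = X⁻¹ * δ^{e(X)}`. -/
def rc (X : B3) : B3 := X⁻¹ * δ ^ elen X

/-- The `n`-th power of the rotation automorphism `τ`: `τ^n (x) = δ^{-n} * x * δ^n`. -/
def tauPow (n : ℤ) (x : B3) : B3 := δ ^ (-n) * x * δ ^ n

/-- The positive braid represented by a list of generator indices. -/
def wordProd (l : List (ZMod 3)) : B3 := (l.map a).prod

/-- A word is nondecreasing if each letter index is the previous one or the previous one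
plus `1` (mod 3). -/
def NDWord (l : List (ZMod 3)) : Prop :=
  l.Chain' (fun x y => y = x ∨ y = x + 1)

/-- The syllable number of a word: the number of maximal constant blocks. -/
def syl : List (ZMod 3) → ℕ
  | [] => 0
  | [_] => 1
  | x :: y :: t => (if x = y then 0 else 1) + syl (y :: t)

/-- The permutations underlying the band generators. -/
def perm3 (i : ZMod 3) : Equiv.Perm (Fin 3) :=
  if i = 0 then Equiv.swap 0 2 else if i = 1 then Equiv.swap 0 1 else Equiv.swap 1 2

lemma perm3_rel : ∀ i : ZMod 3,
    perm3 (i + 1) * perm3 i * (perm3 (i + 2) * perm3 (i + 1))⁻¹ = 1 := by decide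

/-- The homomorphism to the symmetric group on 3 letters (underlying permutation). -/
def permOf : B3 →* Equiv.Perm (Fin 3) :=
  PresentedGroup.toGroup (f := perm3) (by
    rintro r ⟨i, rfl⟩
    simp only [map_mul, map_inv, FreeGroup.lift_apply_of]
    exact perm3_rel i)

/-- The set of band generators and their inverses. -/
def genSet : Set B3 := Set.range a ∪ Set.range (fun i => (a i)⁻¹)

/-- The band-generator word length of a 3-braid. -/
noncomputable def wordLen (x : B3) : ℕ :=
  sInf { n | ∃ s : List B3, s.length = n ∧ (∀ g ∈ s, g ∈ genSet) ∧ s.prod = x }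

/-- The minimal band-generator word length in the conjugacy class. -/
noncomputable def minConjLen (x : B3) : ℕ :=
  sInf { n | ∃ y, IsConj x y ∧ wordLen y = n }

/-- `α` is a summit element with summit exponent `u` if `δ^{-u} * α` is positive and `u` is
the maximal such exponent over the conjugacy class. -/
def IsSummit (α : B3) (u : ℤ) : Prop :=
  δ ^ (-u) * α ∈ Pos ∧ ∀ β : B3, IsConj α β → ∀ v : ℤ, δ ^ (-v) * β ∈ Pos → v ≤ u

lemma braid_rel (i : ZMod 3) : a (i + 1) * a i = a (i + 2) * a (i + 1) :=
  PresentedGroup.mk_eq_mk_of_mul_inv_mem ⟨i, rfl⟩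

lemma delta_eq_a_mul_a (i : ZMod 3) : δ = a (i + 1) * a i := by
  fin_cases i
  · exact (braid_rel 0).symm
  · rfl
  · exact braid_rel 1

lemma a_inv_mul_delta (i : ZMod 3) : (a i)⁻¹ * δ = a (i - 1) := by
  rw [delta_eq_a_mul_a (i - 1), sub_add_cancel, inv_mul_cancel_left]

lemma a_mul_delta (i : ZMod 3) : a i * δ = δ * a (i + 1) := by
  have hδ : δ = a i * a (i + 2) := by
    rw [delta_eq_a_mul_a (i + 2), add_assoc, show (2 : ZMod 3) + 1 = 0 from rfl, add_zero]
  calc a i * δ = a i * (a (i + 2) * a (i + 1)) := by rw [← braid_rel, ← delta_eq_a_mul_a]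
    _ = δ * a (i + 1) := by rw [hδ, mul_assoc]

lemma tauPow_mul (k : ℤ) (x y : B3) : tauPow k (x * y) = tauPow k x * tauPow k y := by
  simp only [tauPow]
  group

lemma tauPow_add (m n : ℤ) (x : B3) : tauPow (m + n) x = tauPow n (tauPow m x) := by
  simp only [tauPow]
  group

lemma tauPow_one_a (i : ZMod 3) : tauPow 1 (a i) = a (i + 1) := by
  rw [tauPow, mul_assoc, zpow_one, a_mul_delta, zpow_neg_one, inv_mul_cancel_left]

lemma tauPow_neg_one_a (i : ZMod 3) : tauPow (-1) (a i) = a (i - 1) := by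
  calc tauPow (-1) (a i) = tauPow (-1) (tauPow 1 (a (i - 1))) := by
        rw [tauPow_one_a, sub_add_cancel]
    _ = a (i - 1) := by rw [← tauPow_add]; simp [tauPow]

lemma tauPow_a (k : ℤ) (i : ZMod 3) : tauPow k (a i) = a (i + k) := by
  induction k using Int.induction_on generalizing i with
  | zero => simp [tauPow]
  | succ n ih => rw [tauPow_add, ih, tauPow_one_a]; push_cast; ring_nf
  | pred n ih =>
      rw [sub_eq_add_neg, tauPow_add, ih, tauPow_neg_one_a]; push_cast; ring_nf

lemma wordProd_cons (i : ZMod 3) (l : List (ZMod 3)) :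
    wordProd (i :: l) = a i * wordProd l := by
  simp [wordProd]

lemma wordProd_append (l₁ l₂ : List (ZMod 3)) :
    wordProd (l₁ ++ l₂) = wordProd l₁ * wordProd l₂ := by
  simp [wordProd]

lemma tauPow_wordProd (k : ℤ) (l : List (ZMod 3)) :
    tauPow k (wordProd l) = wordProd (l.map (· + (k : ZMod 3))) := by
  induction l with
  | nil => simp [tauPow, wordProd]
  | cons i l ih => rw [List.map_cons, wordProd_cons, wordProd_cons, tauPow_mul, ih, tauPow_a]

lemma elen_mul (x y : B3) : elen (x * y) = elen x + elen y := by
  simp [elen]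

lemma elen_a (i : ZMod 3) : elen (a i) = 1 :=
  congrArg Multiplicative.toAdd (PresentedGroup.toGroup.of _)

lemma elen_wordProd (l : List (ZMod 3)) : elen (wordProd l) = l.length := by
  induction l with
  | nil => simp [elen, wordProd]
  | cons i l ih => rw [wordProd_cons, elen_mul, elen_a, ih, List.length_cons]; push_cast; ring

lemma rc_mul (x y : B3) : rc (x * y) = rc y * tauPow (elen y) (rc x) := by
  simp only [rc, tauPow, elen_mul]
  group

lemma rc_a (i : ZMod 3) : rc (a i) = a (i - 1) := by
  rw [rc, elen_a, zpow_one, a_inv_mul_delta]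

def rcWord : List (ZMod 3) → List (ZMod 3)
  | [] => []
  | i :: l => rcWord l ++ [i - 1 + (l.length : ZMod 3)]

lemma length_rcWord (l : List (ZMod 3)) : (rcWord l).length = l.length := by
  induction l with
  | nil => rfl
  | cons i l ih => simp [rcWord, ih]

lemma rc_wordProd (l : List (ZMod 3)) : rc (wordProd l) = wordProd (rcWord l) := by
  induction l with
  | nil => simp [rc, wordProd, elen, rcWord]
  | cons i l ih =>
      rw [wordProd_cons, rc_mul, ih, rc_a, elen_wordProd, tauPow_a, rcWord, wordProd_append]
      simp [wordProd]

lemma NDWord.map_add {l : List (ZMod 3)} (h : NDWord l) (c : ZMod 3) :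
    NDWord (l.map (· + c)) :=
  List.isChain_map_of_isChain _ (by rintro x y (rfl | rfl) <;> simp [add_right_comm]) h

lemma NDWord.rcWord : ∀ {l : List (ZMod 3)}, NDWord l → NDWord (rcWord l)
  | [], _ => List.isChain_nil
  | [_], _ => List.isChain_singleton _
  | i :: j :: l, h => by
      have hj : NDWord (Braid.rcWord (j :: l)) := NDWord.rcWord (l := j :: l) h.tail
      simp only [Braid.rcWord, List.append_assoc, List.singleton_append] at hj ⊢
      refine List.isChain_append_cons_cons.2 ⟨hj, ?_, List.isChain_singleton _⟩
      rcases List.isChain_cons_cons.1 h |>.1 with rfl | rfl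
      · right; simp only [List.length_cons]; push_cast; ring
      · left; simp only [List.length_cons]; push_cast; ring

lemma inv_delta_zpow_mul (u : ℤ) (x : B3) :
    (δ ^ u * x)⁻¹ = δ ^ (-(u + elen x)) * tauPow (-(u + elen x)) (rc x) := by
  simp only [tauPow, rc]
  group

/-- Lemma 2.2(vi): if `α = δ^u P` with `P` nondecreasing of length `n` and `s = u + n`, then
`α⁻¹ = δ^{-s} τ^{-s}(P*)` is the Garside normal form of `α⁻¹`. -/
theorem normal_form_inv (l : List (ZMod 3)) (hl : NDWord l) (u : ℤ) (α : B3)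
    (hα : α = δ ^ u * wordProd l) (s : ℤ) (hs : s = u + l.length) :
    α⁻¹ = δ ^ (-s) * tauPow (-s) (rc (wordProd l)) ∧
    ∃ l' : List (ZMod 3), NDWord l' ∧ l'.length = l.length ∧
      wordProd l' = tauPow (-s) (rc (wordProd l)) := by
  refine ⟨by rw [hα, hs, inv_delta_zpow_mul, elen_wordProd], ?_⟩
  refine ⟨(rcWord l).map (· + ((-s : ℤ) : ZMod 3)), hl.rcWord.map_add _,
    by rw [List.length_map, length_rcWord], ?_⟩
  rw [rc_wordProd, tauPow_wordProd]

end Braid
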